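/- Let M = (A, Σ, δ, ρ) be a Mealy automaton and let M' be the Mealy automaton obtained from M by pruning, i.e., by deleting all states that are not reachable from any cycle of (A, Σ, δ) (together with their transitions). Then M generates a finite semigroup if and only if M' generates a finite semigroup. -/

import Mathlib

/-!
Pruning can only shrink the semigroup, since the generators of `M'` are generators of `M`.
Conversely, every element `f` of the semigroup of `M` preserves lengths and prefixes, so it is
determined by its values on words of length at most `|A|` and by its sections
`f|ₛ = fun t => (f (s ++ t)).drop |s|` at words `s` of length `|A|`. The section of a generator
`x` at `s` is the generator `δₛ(x)`, and by pigeonhole a run of length `|A|` passes through a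
cycle, so `δₛ(x)` is a state of `M'`. Sections of products are products of sections, hence all
these sections lie in the finite semigroup of `M'`.
-/

/-- Extended production function of a Mealy automaton: `mealyMap δ ρ x` is the
action of the state `x` on finite words over the alphabet. -/
def mealyMap {A S : Type*} (δ : S → A → A) (ρ : A → S → S) : A → List S → List S
  | _, [] => []
  | x, i :: s => ρ x i :: mealyMap δ ρ (δ i x) s

/-- The semigroup generated by a Mealy automaton: the subsemigroup of maps
`Σ* → Σ*` (under composition) generated by the production functions. -/
def mealySemigroup {A S : Type*} (δ : S → A → A) (ρ : A → S → S) :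
    Subsemigroup (Function.End (List S)) :=
  Subsemigroup.closure (Set.range fun x => (mealyMap δ ρ x : Function.End (List S)))

/-- The group generated by an invertible Mealy automaton: the subgroup of
permutations of `Σ*` generated by the production functions. -/
def mealyGroup {A S : Type*} (δ : S → A → A) (ρ : A → S → S) :
    Subgroup (Equiv.Perm (List S)) :=
  Subgroup.closure {f : Equiv.Perm (List S) | ∃ x : A, ⇑f = mealyMap δ ρ x}

/-- A cycle in the automaton `(A, Σ, δ)`: pairwise distinct states
`states 0, …, states (n-1)` with transitions `states k —labels k→ states (k+1 mod n)`. -/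
structure MealyCycle {A S : Type*} (δ : S → A → A) where
  n : ℕ
  npos : 0 < n
  states : Fin n → A
  labels : Fin n → S
  inj : Function.Injective states
  step : ∀ k : Fin n, δ (labels k) (states k) = states ⟨(k + 1) % n, Nat.mod_lt _ npos⟩

/-- The cycle has an external exit. -/
def HasExternalExit {A S : Type*} {δ : S → A → A} (C : MealyCycle δ) : Prop :=
  ∃ (k : Fin C.n) (i : S), δ i (C.states k) ∉ Set.range C.states

/-- The cycle has an internal exit. -/
def HasInternalExit {A S : Type*} {δ : S → A → A} (C : MealyCycle δ) : Prop :=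
  ∃ (k : Fin C.n) (i : S), δ i (C.states k) ∈ Set.range C.states ∧
    δ i (C.states k) ≠ δ (C.labels k) (C.states k)

/-- `v` is reachable from `u` in the automaton `(A, Σ, δ)`. -/
def Reachable {A S : Type*} (δ : S → A → A) (u v : A) : Prop :=
  ∃ s : List S, s.foldl (fun a i => δ i a) u = v

/-- Action of a word `s ∈ Σ*` on states of powers of the automaton (words over `A`),
via the production functions of the dual automaton: `dualAct δ ρ s = δ_s`. -/
def dualAct {A S : Type*} (δ : S → A → A) (ρ : A → S → S) (s : List S) (u : List A) : List A :=
  s.foldl (fun w i => mealyMap ρ δ i w) u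

/-- Two states of a power of a reversible Mealy automaton lie in the same
connected component iff some `δ_s` maps one to the other. -/
def sameComp {A S : Type*} (δ : S → A → A) (ρ : A → S → S) (u w : List A) : Prop :=
  ∃ s : List S, dualAct δ ρ s u = w

/-- The set of states reachable from (a state of) some cycle of the automaton. -/
def cycleReach {A S : Type*} (δ : S → A → A) : Set A :=
  {v | ∃ (C : MealyCycle δ) (k : Fin C.n), Reachable δ (C.states k) v}

/-- The set of states reachable from cycles is closed under all transition functions. -/
lemma cycleReach_closed {A S : Type*} (δ : S → A → A) (i : S) {v : A}
    (hv : v ∈ cycleReach δ) : δ i v ∈ cycleReach δ := by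
  obtain ⟨C, k, s, hs⟩ := hv
  exact ⟨C, k, s ++ [i], by simp [List.foldl_append, hs]⟩

/-- Transition functions of the pruned automaton, the restriction of the automaton to the
states reachable from its cycles. -/
def prunedδ {A S : Type*} (δ : S → A → A) (i : S) (v : cycleReach δ) : cycleReach δ :=
  ⟨δ i v.1, cycleReach_closed δ i v.2⟩

lemma exists_lt_apply_eq_of_not_injective {ι γ : Type*} [LinearOrder ι] {g : ι → γ}
    (h : ¬ Function.Injective g) : ∃ j k, j < k ∧ g j = g k := by
  obtain ⟨j, k, heq, hne⟩ := Function.not_injective_iff.1 h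
  rcases hne.lt_or_gt with hlt | hlt
  exacts [⟨j, k, hlt, heq⟩, ⟨k, j, hlt, heq.symm⟩]

section Foldl
variable {α β : Type*} (f : β → α → β)

lemma foldl_take_succ (b : β) (t : List α) {k : ℕ} (hk : k < t.length) :
    (t.take (k + 1)).foldl f b = f ((t.take k).foldl f b) t[k] := by
  rw [List.take_add_one, List.foldl_append, List.getElem?_eq_getElem hk]
  rfl

lemma foldl_drop_take (b : β) (t : List α) {j k : ℕ} (hjk : j ≤ k) :
    ((t.take k).drop j).foldl f ((t.take j).foldl f b) = (t.take k).foldl f b := by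
  have hprefix : (t.take k).take j = t.take j := by rw [List.take_take, Nat.min_eq_left hjk]
  rw [← hprefix, ← List.foldl_append, List.take_append_drop]

lemma foldl_take_append_drop_of_foldl_take_eq (b : β) (t : List α) {j k : ℕ}
    (h : (t.take j).foldl f b = (t.take k).foldl f b) :
    (t.take j ++ t.drop k).foldl f b = t.foldl f b := by
  rw [List.foldl_append, h, ← List.foldl_append, List.take_append_drop]

end Foldl

section Mealy
variable {A S : Type*} (δ : S → A → A) (ρ : A → S → S)

lemma mealyMap_length (x : A) (s : List S) : (mealyMap δ ρ x s).length = s.length := by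
  induction s generalizing x with
  | nil => rfl
  | cons i t ih => simp [mealyMap, ih]

lemma mealyMap_append (x : A) (s t : List S) :
    mealyMap δ ρ x (s ++ t) =
      mealyMap δ ρ x s ++ mealyMap δ ρ (s.foldl (fun a i => δ i a) x) t := by
  induction s generalizing x with
  | nil => rfl
  | cons i u ih => simp [mealyMap, ih]

lemma mealyMap_pruned (v : cycleReach δ) :
    mealyMap (prunedδ δ) (fun v : cycleReach δ => ρ v.1) v = mealyMap δ ρ v.1 := by
  funext s
  induction s generalizing v with
  | nil => rfl
  | cons i t ih => simp [mealyMap, ih, prunedδ]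

lemma mealySemigroup_pruned_le :
    mealySemigroup (prunedδ δ) (fun v : cycleReach δ => ρ v.1) ≤ mealySemigroup δ ρ := by
  refine Subsemigroup.closure_le.2 ?_
  rintro _ ⟨v, rfl⟩
  exact Subsemigroup.subset_closure ⟨v.1, (mealyMap_pruned δ ρ v).symm⟩

end Mealy

section Cycles
variable {A S : Type*} (δ : S → A → A)

lemma foldl_mem_cycleReach {x : A} (hx : x ∈ cycleReach δ) (s : List S) :
    s.foldl (fun a i => δ i a) x ∈ cycleReach δ := by
  induction s generalizing x with
  | nil => exact hx
  | cons i t ih => exact ih (cycleReach_closed δ i hx)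

lemma mem_cycleReach_of_loop_of_injective {x : A} {t : List S} (hne : t ≠ [])
    (hloop : t.foldl (fun a i => δ i a) x = x)
    (hinj : Function.Injective fun k : Fin t.length => (t.take k).foldl (fun a i => δ i a) x) :
    x ∈ cycleReach δ := by
  have npos : 0 < t.length := List.length_pos_iff.2 hne
  refine ⟨⟨t.length, npos, fun k => (t.take k).foldl (fun a i => δ i a) x,
    fun k => t[k.1], hinj, fun k => ?_⟩, ⟨0, npos⟩, [], by simp⟩
  dsimp only
  rw [← foldl_take_succ (fun a i => δ i a) x t k.2]
  rcases (show k.1 + 1 ≤ t.length from k.2).eq_or_lt with hk | hk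
  · rw [hk, Nat.mod_self, List.take_length, List.take_zero, hloop]
    rfl
  · rw [Nat.mod_eq_of_lt hk]

lemma mem_cycleReach_of_loop {x : A} {t : List S} (hne : t ≠ [])
    (hloop : t.foldl (fun a i => δ i a) x = x) : x ∈ cycleReach δ := by
  induction hn : t.length using Nat.strong_induction_on generalizing t with
  | _ n ih =>
  by_cases hinj : Function.Injective
      fun k : Fin t.length => (t.take k).foldl (fun a i => δ i a) x
  · exact mem_cycleReach_of_loop_of_injective δ hne hloop hinj
  -- Two equal intermediate states cut out a shorter loop at `x`.
  obtain ⟨j, k, hlt, hjk⟩ := exists_lt_apply_eq_of_not_injective hinj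
  rw [Fin.lt_def] at hlt
  have hlen : (t.take j ++ t.drop k).length = j + (t.length - k) := by simp
  refine ih (t.take j ++ t.drop k).length (by omega) (fun h => ?_) ?_ rfl
  · have := congrArg List.length h
    simp only [hlen, List.length_nil] at this
    omega
  · rw [foldl_take_append_drop_of_foldl_take_eq _ x t hjk, hloop]

/-- Pigeonhole: a run of length `|A|` revisits a state, hence passes through a cycle. -/
lemma foldl_mem_cycleReach_of_card_le [Fintype A] (x : A) {s : List S}
    (hs : Fintype.card A ≤ s.length) :
    s.foldl (fun a i => δ i a) x ∈ cycleReach δ := by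
  have hinj : ¬ Function.Injective
      fun k : Fin (Fintype.card A + 1) => (s.take k).foldl (fun a i => δ i a) x :=
    fun h => by simpa using Fintype.card_le_of_injective _ h
  obtain ⟨j, k, hlt, hjk⟩ := exists_lt_apply_eq_of_not_injective hinj
  rw [Fin.lt_def] at hlt
  set y := (s.take j).foldl (fun a i => δ i a) x
  have hy : y ∈ cycleReach δ := by
    refine mem_cycleReach_of_loop δ (t := (s.take k).drop j) (fun h => ?_) ?_
    · have := congrArg List.length h
      simp only [List.length_drop, List.length_take, List.length_nil] at this
      omega
    · rw [foldl_drop_take _ x s hlt.le, hjk]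
  rw [← List.take_append_drop j s, List.foldl_append]
  exact foldl_mem_cycleReach δ hy _

end Cycles

section Synchronous
variable {S : Type*}

def synchronousMaps (S : Type*) : Subsemigroup (Function.End (List S)) where
  carrier := {f | (∀ s, (f s).length = s.length) ∧ ∀ s t, (f (s ++ t)).take s.length = f s}
  mul_mem' := by
    rintro g h ⟨hg_len, hg_pre⟩ ⟨hh_len, hh_pre⟩
    refine ⟨fun s => (hg_len _).trans (hh_len s), fun s t => ?_⟩
    change (g (h (s ++ t))).take s.length = g (h s)
    rw [← List.take_append_drop s.length (h (s ++ t)), hh_pre, ← hh_len s, hg_pre]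

def sectionAt (f : Function.End (List S)) (s : List S) : Function.End (List S) :=
  fun t => (f (s ++ t)).drop s.length

lemma apply_append_eq_of_mem_synchronousMaps {f : Function.End (List S)}
    (hf : f ∈ synchronousMaps S) (s t : List S) : f (s ++ t) = f s ++ sectionAt f s t := by
  rw [sectionAt, ← hf.2 s t, List.take_append_drop]

lemma sectionAt_mul {g h : Function.End (List S)} (hh : h ∈ synchronousMaps S) (s : List S) :
    sectionAt (g * h) s = sectionAt g (h s) * sectionAt h s := by
  funext t
  change (g (h (s ++ t))).drop s.length = (g (h s ++ sectionAt h s t)).drop (h s).length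
  rw [apply_append_eq_of_mem_synchronousMaps hh, hh.1]

lemma eq_of_sectionAt_eq {f g : Function.End (List S)} (hf : f ∈ synchronousMaps S)
    (hg : g ∈ synchronousMaps S) (n : ℕ) (hshort : ∀ s : List S, s.length ≤ n → f s = g s)
    (hsec : ∀ s : List S, s.length = n → sectionAt f s = sectionAt g s) : f = g := by
  funext s
  rcases le_or_gt s.length n with hs | hs
  · exact hshort s hs
  have hprefix : (s.take n).length = n := List.length_take_of_le hs.le
  rw [← List.take_append_drop n s, apply_append_eq_of_mem_synchronousMaps hf,
    apply_append_eq_of_mem_synchronousMaps hg, hshort _ hprefix.le, hsec _ hprefix]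

lemma finite_of_sectionAt_mem [Finite S] {T U : Set (Function.End (List S))} [Finite U]
    (hT : T ⊆ synchronousMaps S) (n : ℕ)
    (hsec : ∀ f ∈ T, ∀ s : List S, s.length = n → sectionAt f s ∈ U) : Finite T := by
  have : Finite {s : List S // s.length ≤ n} := (List.finite_length_le S n).to_subtype
  have : Finite {s : List S // s.length = n} := (List.finite_length_eq S n).to_subtype
  let encode (f : T) : ({s : List S // s.length ≤ n} → {s : List S // s.length ≤ n}) ×
      ({s : List S // s.length = n} → U) :=
    (fun s => ⟨f.1 s, ((hT f.2).1 s).trans_le s.2⟩, fun s => ⟨sectionAt f.1 s, hsec f f.2 s s.2⟩)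
  refine Finite.of_injective encode fun f g hfg => Subtype.ext ?_
  refine eq_of_sectionAt_eq (hT f.2) (hT g.2) n (fun s hs => ?_) (fun s hs => ?_)
  · exact congrArg Subtype.val (congrFun (congrArg Prod.fst hfg) ⟨s, hs⟩)
  · exact congrArg Subtype.val (congrFun (congrArg Prod.snd hfg) ⟨s, hs⟩)

end Synchronous

section MealySections
variable {A S : Type*} (δ : S → A → A) (ρ : A → S → S)

lemma sectionAt_mealyMap (x : A) (s : List S) :
    sectionAt (mealyMap δ ρ x) s = mealyMap δ ρ (s.foldl (fun a i => δ i a) x) := by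
  funext t
  change (mealyMap δ ρ x (s ++ t)).drop s.length = _
  rw [mealyMap_append, List.drop_left' (mealyMap_length δ ρ x s)]

lemma mealySemigroup_le_synchronousMaps : mealySemigroup δ ρ ≤ synchronousMaps S := by
  refine Subsemigroup.closure_le.2 ?_
  rintro _ ⟨x, rfl⟩
  refine ⟨mealyMap_length δ ρ x, fun s t => ?_⟩
  change (mealyMap δ ρ x (s ++ t)).take s.length = mealyMap δ ρ x s
  rw [mealyMap_append, List.take_left' (mealyMap_length δ ρ x s)]

lemma sectionAt_mem_mealySemigroup_pruned [Fintype A] {f : Function.End (List S)}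
    (hf : f ∈ mealySemigroup δ ρ) {s : List S} (hs : Fintype.card A ≤ s.length) :
    sectionAt f s ∈ mealySemigroup (prunedδ δ) (fun v : cycleReach δ => ρ v.1) := by
  induction hf using Subsemigroup.closure_induction generalizing s with
  | mem _ hg =>
    obtain ⟨x, rfl⟩ := hg
    rw [sectionAt_mealyMap, ← mealyMap_pruned δ ρ ⟨_, foldl_mem_cycleReach_of_card_le δ x hs⟩]
    exact Subsemigroup.subset_closure ⟨_, rfl⟩
  | mul g h _ hh ihg ihh =>
    have hh_sync := mealySemigroup_le_synchronousMaps δ ρ hh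
    rw [sectionAt_mul hh_sync]
    exact mul_mem (ihg (by rwa [hh_sync.1])) (ihh hs)

end MealySections

theorem prune_finite_iff_general
    {A S : Type*} [Fintype A] [Fintype S]
    (δ : S → A → A) (ρ : A → S → S) :
    Finite ↥(mealySemigroup δ ρ) ↔
      Finite ↥(mealySemigroup (prunedδ δ) (fun v : cycleReach δ => ρ v.1)) := by
  refine ⟨fun _ => Finite.Set.subset _ (mealySemigroup_pruned_le δ ρ), fun _ => ?_⟩
  exact finite_of_sectionAt_mem (mealySemigroup_le_synchronousMaps δ ρ) (Fintype.card A)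
    fun f hf s hs => sectionAt_mem_mealySemigroup_pruned δ ρ hf hs.ge

/-- F1: pruning a Mealy automaton (deleting the states not reachable
from any cycle) does not change finiteness of the generated semigroup. -/
theorem prune_finite_iff
    {A S : Type*} [Fintype A] [Fintype S] [Nonempty A] [Nonempty S]
    (δ : S → A → A) (ρ : A → S → S) :
    Finite ↥(mealySemigroup δ ρ) ↔
      Finite ↥(mealySemigroup (prunedδ δ) (fun v : cycleReach δ => ρ v.1)) :=
  prune_finite_iff_general δ ρ
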